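/- For a constant a, define φ_{n−a}(x) = ((r_{1,n}−a)/(β(n−a))) log(1+s_{1,n} x) + ((r_{2,n}−a)/(β(n−a))) log(1−s_{2,n} x). Under Assumption A, for any L, M with −1/√γ < −L < M < 1/(√γσ), the functions φ_{n−a} converge uniformly on [−L, M] to φ_{γ,σ} as n → ∞. -/

import Mathlib

open MeasureTheory Filter Topology Real

noncomputable section

namespace BetaJacobiLDP

/-- The exponent `r_{i,n} = β (pᵢ − n + 1)/2`. -/
def rExp (β : ℝ) (n pi : ℕ) : ℝ := β * ((pi : ℝ) - (n : ℝ) + 1) / 2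

/-- The scaling constant `s_{i,n} = √(n p₁)/pᵢ`. -/
def sC (n p1 pi : ℕ) : ℝ := Real.sqrt ((n : ℝ) * (p1 : ℝ)) / (pi : ℝ)

/-- The unnormalized β-Jacobi density
`∏_{i<j} |x_i − x_j|^β ∏_i x_i^{r_{1,n}−1} (1−x_i)^{r_{2,n}−1}`. -/
def jDen (β : ℝ) (n p1 p2 : ℕ) (x : Fin n → ℝ) : ℝ :=
  (∏ i : Fin n, ∏ j : Fin n, if (i : ℕ) < (j : ℕ) then |x i - x j| ^ β else 1) *
    ∏ i : Fin n, (x i ^ (rExp β n p1 - 1) * (1 - x i) ^ (rExp β n p2 - 1))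

/-- The density restricted to `[0,1]^n`, as an `ℝ≥0∞`-valued function. -/
def jDenE (β : ℝ) (n p1 p2 : ℕ) : (Fin n → ℝ) → ENNReal :=
  (Set.univ.pi fun _ : Fin n => Set.Icc (0 : ℝ) 1).indicator
    fun x => ENNReal.ofReal (jDen β n p1 p2 x)

/-- The β-Jacobi ensemble `𝒥_n(p₁,p₂)`: the normalized measure with density `jDen`. -/
def jacobiMeasure (β : ℝ) (n p1 p2 : ℕ) : Measure (Fin n → ℝ) :=
  (∫⁻ x, jDenE β n p1 p2 x)⁻¹ • (volume.withDensity (jDenE β n p1 p2))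

/-- Probability of an event under the β-Jacobi ensemble. -/
def jProb (β : ℝ) (n p1 p2 : ℕ) (S : Set (Fin n → ℝ)) : ℝ :=
  (jacobiMeasure β n p1 p2 S).toReal

/-- The scaling map `t ↦ ((p₁+p₂) t − p₁)/√(n p₁)`. -/
def Xscale (n p1 p2 : ℕ) (t : ℝ) : ℝ :=
  (((p1 : ℝ) + (p2 : ℝ)) * t - (p1 : ℝ)) / Real.sqrt ((n : ℝ) * (p1 : ℝ))

/-- `X_{(n)}`, the largest of the scaled coordinates. -/
def Xmax (n p1 p2 : ℕ) (lam : Fin n → ℝ) : ℝ := ⨆ i, Xscale n p1 p2 (lam i)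

/-- `X_{(1)}`, the smallest of the scaled coordinates. -/
def Xmin (n p1 p2 : ℕ) (lam : Fin n → ℝ) : ℝ := ⨅ i, Xscale n p1 p2 (lam i)

/-- Assumption A of the paper: `p₁/p₂ → σ ≥ 0`, `n/p₁ → γ ∈ [0, 1 ∧ 1/σ)`,
`log n/(β n) → 0`, with `β > 0` and `p₁, p₂ ≥ n`. -/
structure AssumptionA (β : ℕ → ℝ) (p1 p2 : ℕ → ℕ) (γ σ : ℝ) : Prop where
  hβ : ∀ n, 0 < β n
  hp1 : ∀ n, n ≤ p1 n
  hp2 : ∀ n, n ≤ p2 n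
  hσ : 0 ≤ σ
  hγ0 : 0 ≤ γ
  hγ1 : γ < 1
  hγσ : γ * σ < 1
  limσ : Tendsto (fun n : ℕ => (p1 n : ℝ) / (p2 n : ℝ)) atTop (𝓝 σ)
  limγ : Tendsto (fun n : ℕ => (n : ℝ) / (p1 n : ℝ)) atTop (𝓝 γ)
  limlog : Tendsto (fun n : ℕ => Real.log n / (β n * n)) atTop (𝓝 0)

/-- `ũ₂ = ((1−σ)√γ + 2√(1+σ−σγ))/(1+σ)`. -/
def u2t (γ σ : ℝ) : ℝ := ((1 - σ) * Real.sqrt γ + 2 * Real.sqrt (1 + σ - σ * γ)) / (1 + σ)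

/-- `ũ₁ = ((1−σ)√γ − 2√(1+σ−σγ))/(1+σ)`. -/
def u1t (γ σ : ℝ) : ℝ := ((1 - σ) * Real.sqrt γ - 2 * Real.sqrt (1 + σ - σ * γ)) / (1 + σ)

/-- The semicircle density `c₂`. -/
def semicircle (x : ℝ) : ℝ := if |x| ≤ 2 then Real.sqrt (4 - x ^ 2) / (2 * π) else 0

/-- The Marchenko–Pastur density `h_γ`. -/
def mpDen (γ x : ℝ) : ℝ :=
  if (Real.sqrt γ - 1) ^ 2 ≤ x ∧ x ≤ (Real.sqrt γ + 1) ^ 2 then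
    Real.sqrt ((x - (Real.sqrt γ - 1) ^ 2) * ((Real.sqrt γ + 1) ^ 2 - x)) / (2 * π * γ * x)
  else 0

/-- Left edge `u₁` of the Wachter law. -/
def wU1 (γ σ : ℝ) : ℝ :=
  σ / (1 + σ) * (Real.sqrt (1 - σ * γ / (1 + σ)) - Real.sqrt (γ / (1 + σ))) ^ 2

/-- Right edge `u₂` of the Wachter law. -/
def wU2 (γ σ : ℝ) : ℝ :=
  σ / (1 + σ) * (Real.sqrt (1 - σ * γ / (1 + σ)) + Real.sqrt (γ / (1 + σ))) ^ 2

/-- The Wachter density `h_{γ,σ}`. -/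
def wachterDen (γ σ x : ℝ) : ℝ :=
  if wU1 γ σ ≤ x ∧ x ≤ wU2 γ σ then
    (1 + σ) / (2 * π * σ * γ) * Real.sqrt ((x - wU1 γ σ) * (wU2 γ σ - x)) / (x * (1 - x))
  else 0

/-- The density of the limit law `ν̃_{γ,σ}`. -/
def nuDen (γ σ x : ℝ) : ℝ :=
  if 0 < σ * γ then
    σ * Real.sqrt γ / (1 + σ) * wachterDen γ σ (σ / (1 + σ) * (1 + Real.sqrt γ * x))
  else if 0 < γ then Real.sqrt γ * mpDen γ (1 + Real.sqrt γ * x)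
  else Real.sqrt (1 + σ) * semicircle (Real.sqrt (1 + σ) * x)

/-- The logarithmic potential `∫ log|x−y| ν̃_{γ,σ}(dy)`. -/
def logPot (γ σ x : ℝ) : ℝ := ∫ y : ℝ, Real.log |x - y| * nuDen γ σ y

/-- The function `φ_{γ,σ}`. -/
def phiLim (γ σ x : ℝ) : ℝ :=
  if 0 < σ * γ then
    (1 - γ) / (2 * γ) * Real.log (1 + Real.sqrt γ * x) +
      (1 - γ * σ) / (2 * γ * σ) * Real.log (1 - Real.sqrt γ * σ * x)
  else if 0 < γ then (1 - γ) / (2 * γ) * Real.log (1 + Real.sqrt γ * x) - x / (2 * Real.sqrt γ)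
  else -(1 + σ) * x ^ 2 / 4

/-- The constant `z_{γ,σ}`. -/
def zConst (γ σ : ℝ) : ℝ :=
  if 0 < σ * γ then
    Real.log (1 + σ) / 2 + (1 + σ - γ * σ) / (2 * γ * σ) * Real.log (1 + γ * σ / (1 + σ - γ * σ))
  else if 0 < γ then 1 / 2
  else Real.log (1 + σ) / 2 + 1 / 2

open Classical in
/-- The rate function `J_{γ,σ}` of `X_{(n)}`, with value `+∞` outside `[ũ₂, 1/(√γ σ))`
(the right endpoint being `+∞` when `γσ = 0`). -/
def Jrate (γ σ : ℝ) (x : ℝ) : EReal :=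
  if u2t γ σ ≤ x ∧ (0 < γ * σ → x < 1 / (Real.sqrt γ * σ)) then
    ((-zConst γ σ - logPot γ σ x - phiLim γ σ x : ℝ) : EReal)
  else ⊤

open Classical in
/-- The rate function `I_{γ,σ}` of `X_{(1)}`, with value `+∞` outside `(−1/√γ, ũ₁]`
(the left endpoint being `−∞` when `γ = 0`). -/
def Irate (γ σ : ℝ) (x : ℝ) : EReal :=
  if x ≤ u1t γ σ ∧ (0 < γ → -(1 / Real.sqrt γ) < x) then
    ((-zConst γ σ - logPot γ σ x - phiLim γ σ x : ℝ) : EReal)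
  else ⊤

/-- `κ = γσ` if `0 < σγ < 1`, and `κ = (1+σ)/2` if `σγ = 0`. -/
def kap (γ σ : ℝ) : ℝ := if 0 < σ * γ then γ * σ else (1 + σ) / 2

/-- `J'_{γ,σ}(x) = κ √((x−ũ₁)(x−ũ₂)) / ((1+√γ x)(1−σ√γ x))` on `(ũ₂, 1/(√γσ))`. -/
def Dfun (γ σ x : ℝ) : ℝ :=
  kap γ σ * Real.sqrt ((x - u1t γ σ) * (x - u2t γ σ)) /
    ((1 + Real.sqrt γ * x) * (1 - σ * Real.sqrt γ * x))

/-- `|I'_{γ,σ}(x)| = κ √((ũ₁−x)(ũ₂−x)) / ((1+√γ x)(1−σ√γ x))` on `(−1/√γ, ũ₁)`. -/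
def DfunLow (γ σ x : ℝ) : ℝ :=
  kap γ σ * Real.sqrt ((u1t γ σ - x) * (u2t γ σ - x)) /
    ((1 + Real.sqrt γ * x) * (1 - σ * Real.sqrt γ * x))

/-- `u_n(x) = (1+s_{1,n}x)^{r_{1,n}−1}(1−s_{2,n}x)^{r_{2,n}−1}`. -/
def uFun (β : ℝ) (n p1 p2 : ℕ) (x : ℝ) : ℝ :=
  (1 + sC n p1 p1 * x) ^ (rExp β n p1 - 1) * (1 - sC n p1 p2 * x) ^ (rExp β n p2 - 1)

/-- The ratio `C_n^{p₁,p₂}/C_{n−1}^{p₁−1,p₂−1}` expressed through Gamma functions. -/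
def cRatio (β : ℝ) (n p1 p2 : ℕ) : ℝ :=
  Real.Gamma (1 + β / 2) * Real.Gamma (β * ((p1 : ℝ) + (p2 : ℝ)) / 2) *
      Real.Gamma (β * ((p1 : ℝ) + (p2 : ℝ) - 1) / 2) /
    (Real.Gamma (1 + β * n / 2) * Real.Gamma (β * (p1 : ℝ) / 2) * Real.Gamma (β * (p2 : ℝ) / 2) *
      Real.Gamma (β * ((p1 : ℝ) + (p2 : ℝ) - (n : ℝ)) / 2))

/-- The normalizing constant `B_n`. -/
def Bfun (β : ℝ) (n p1 p2 : ℕ) : ℝ :=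
  (n : ℝ) * (sC n p1 p1 / (sC n p1 p1 + sC n p1 p2)) ^ (β * ((n : ℝ) - 1) + rExp β n p2) *
    (sC n p1 p2 / (sC n p1 p1 + sC n p1 p2)) ^ (β * ((n : ℝ) - 1) + rExp β n p1) *
    cRatio β n p1 p2

/-- The monotone (increasing) rearrangement of a tuple. -/
def ordStat {n : ℕ} (x : Fin n → ℝ) : Fin n → ℝ := fun i => x (Tuple.sort x i)

/-- The `k`-th smallest of the scaled coordinates (`k = 0, …, n−1`); in particular
`XsortTop n p1 p2 lam (n-1) = X_{(n)}` and `XsortTop n p1 p2 lam 0 = X_{(1)}`. -/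
def XsortTop (n p1 p2 : ℕ) (lam : Fin n → ℝ) (k : ℕ) : ℝ :=
  if h : k < n then ordStat (fun i => Xscale n p1 p2 (lam i)) ⟨k, h⟩ else 0

/-- `∏_{i=1}^{n-1} (X_{(n)} − X_{(i)})^β`. -/
def prodGapTop (β : ℝ) (n p1 p2 : ℕ) (lam : Fin n → ℝ) : ℝ :=
  ∏ i : Fin n,
    if (i : ℕ) < n - 1 then (XsortTop n p1 p2 lam (n - 1) - XsortTop n p1 p2 lam i) ^ β else 1

/-- `∏_{i=2}^{n} (X_{(i)} − X_{(1)})^β`. -/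
def prodGapBot (β : ℝ) (n p1 p2 : ℕ) (lam : Fin n → ℝ) : ℝ :=
  ∏ i : Fin n,
    if 0 < (i : ℕ) then (XsortTop n p1 p2 lam i - XsortTop n p1 p2 lam 0) ^ β else 1

/-- The reciprocal `h_w(y)⁻¹` of the truncated-exponential density
`h_w(y) = r e^{−r(y−max(x,w))}/(1−e^{−r(p₂/√(n p₁) − max(x,w))})`. -/
def hInvTop (r x w : ℝ) (n p1 p2 : ℕ) (y : ℝ) : ℝ :=
  (1 - Real.exp (-(r * ((p2 : ℝ) / Real.sqrt ((n : ℝ) * (p1 : ℝ)) - max x w)))) / r *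
    Real.exp (r * (y - max x w))

/-- The reciprocal `ĥ_w(y)⁻¹` of the truncated-exponential density
`ĥ_w(y) = r e^{r(y−min(x,w))}/(1−e^{−r(√(p₁/n) + min(x,w))})`. -/
def hInvBot (r x w : ℝ) (n p1 : ℕ) (y : ℝ) : ℝ :=
  (1 - Real.exp (-(r * (Real.sqrt ((p1 : ℝ) / (n : ℝ)) + min x w)))) / r *
    Real.exp (-(r * (y - min x w)))

open Classical in
/-- The integrand `B_n u_n(X_{(n)}) h_{X_{(n−1)}}(X_{(n)})⁻¹ ∏_{i<n}(X_{(n)}−X_{(i)})^β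
𝟙{X_{(n)} > max(x, X_{(n−1)})}`. -/
def isIntegrandTop (β r x : ℝ) (n p1 p2 : ℕ) (lam : Fin n → ℝ) : ℝ :=
  Bfun β n p1 p2 * uFun β n p1 p2 (XsortTop n p1 p2 lam (n - 1)) *
    hInvTop r x (XsortTop n p1 p2 lam (n - 2)) n p1 p2 (XsortTop n p1 p2 lam (n - 1)) *
    prodGapTop β n p1 p2 lam *
    (if max x (XsortTop n p1 p2 lam (n - 2)) < XsortTop n p1 p2 lam (n - 1) then 1 else 0)

/-- The second moment `E^R[F_n²]` of the importance sampling estimator of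
`P(X_{(n)} > x)`. -/
def secondMomTop (β r x : ℝ) (n p1 p2 : ℕ) : ℝ :=
  ∫ lam, isIntegrandTop β r x n p1 p2 lam ∂(jacobiMeasure β n p1 p2)

open Classical in
/-- As `isIntegrandTop`, with the additional restriction `X_{(n)} > M`. -/
def isIntegrandTopM (β r x M : ℝ) (n p1 p2 : ℕ) (lam : Fin n → ℝ) : ℝ :=
  Bfun β n p1 p2 * uFun β n p1 p2 (XsortTop n p1 p2 lam (n - 1)) *
    hInvTop r x (XsortTop n p1 p2 lam (n - 2)) n p1 p2 (XsortTop n p1 p2 lam (n - 1)) *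
    prodGapTop β n p1 p2 lam *
    (if max x (XsortTop n p1 p2 lam (n - 2)) < XsortTop n p1 p2 lam (n - 1) ∧
        M < XsortTop n p1 p2 lam (n - 1) then 1 else 0)

/-- `A_n(M)`, the contribution of `{X_{(n)} > M}` to the second moment. -/
def secondMomTopM (β r x M : ℝ) (n p1 p2 : ℕ) : ℝ :=
  ∫ lam, isIntegrandTopM β r x M n p1 p2 lam ∂(jacobiMeasure β n p1 p2)

open Classical in
/-- The integrand `B_n u_n(X_{(1)}) ĥ_{X_{(2)}}(X_{(1)})⁻¹ ∏_{i≥2}(X_{(i)}−X_{(1)})^β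
𝟙{X_{(1)} < min(x, X_{(2)})}`. -/
def isIntegrandBot (β r x : ℝ) (n p1 p2 : ℕ) (lam : Fin n → ℝ) : ℝ :=
  Bfun β n p1 p2 * uFun β n p1 p2 (XsortTop n p1 p2 lam 0) *
    hInvBot r x (XsortTop n p1 p2 lam 1) n p1 (XsortTop n p1 p2 lam 0) *
    prodGapBot β n p1 p2 lam *
    (if XsortTop n p1 p2 lam 0 < min x (XsortTop n p1 p2 lam 1) then 1 else 0)

/-- The second moment `E^T[G_n²]` of the importance sampling estimator of
`P(X_{(1)} < x)`. -/
def secondMomBot (β r x : ℝ) (n p1 p2 : ℕ) : ℝ :=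
  ∫ lam, isIntegrandBot β r x n p1 p2 lam ∂(jacobiMeasure β n p1 p2)

/-- `φ_{n−a}(x)`. -/
def phiN (β : ℝ) (n p1 p2 : ℕ) (a x : ℝ) : ℝ :=
  (rExp β n p1 - a) / (β * ((n : ℝ) - a)) * Real.log (1 + sC n p1 p1 * x) +
    (rExp β n p2 - a) / (β * ((n : ℝ) - a)) * Real.log (1 - sC n p1 p2 * x)

/-- The law `Q_{n−1}^{p₁−1,p₂−1}` of the order statistics of the scaled
`β`-Jacobi ensemble `𝒥_{n−1}(p₁−1,p₂−1)`. -/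
def Qlaw (β : ℝ) (n p1 p2 : ℕ) : Measure (Fin (n - 1) → ℝ) :=
  Measure.map (fun lam => ordStat fun i => Xscale n p1 p2 (lam i))
    (jacobiMeasure β (n - 1) (p1 - 1) (p2 - 1))

/-- The simplex `Δ_{n−1} = {−1/s_{1,n} ≤ x₁ ≤ … ≤ x_{n−1} ≤ 1/s_{2,n}}`. -/
def deltaSet (n p1 p2 : ℕ) : Set (Fin (n - 1) → ℝ) :=
  {y | (∀ i j : Fin (n - 1), i ≤ j → y i ≤ y j) ∧
    ∀ i, -(1 / sC n p1 p1) ≤ y i ∧ y i ≤ 1 / sC n p1 p2}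

/-!
Write `c log (1 + s x) = c s x + c s² logRem s x`, where
`logRem t x = (log (1 + t x) - t x) / t²` extends continuously to `t = 0` by `-x²/2`.
Then `φ_{n-a}(x) = A_n x + B_n logRem s_{1,n} x + C_n logRem (-s_{2,n}) x`. The coefficients of
the logarithms may blow up (when `γ = 0` or `σ = 0`), but `A_n → √γ(σ-1)/2`, `B_n → (1-γ)/2`,
`C_n → σ(1-γσ)/2`, and `φ_{γ,σ}` is the same expression at the limiting parameters. Since
`logRem` is jointly continuous on `{1 + t x > 0}`, which contains the limiting parameters times
`[-L, M]`, convergence of the parameters gives uniform convergence on the compact interval.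
-/

open Set Function

theorem tendstoUniformlyOn_of_continuousOn_of_tendsto {α β γ ι : Type*} [UniformSpace α]
    [LocallyCompactSpace α] [UniformSpace β] [UniformSpace γ] {F : α → β → γ}
    {W : Set (α × β)} (hW : IsOpen W) (hF : ContinuousOn ↿F W) {K : Set β} (hK : IsCompact K)
    {c : α} (hcK : {c} ×ˢ K ⊆ W) {l : Filter ι} {v : ι → α} (hv : Tendsto v l (𝓝 c)) :
    TendstoUniformlyOn (fun i => F (v i)) (F c) l K := by
  obtain ⟨U, V, hU, -, hcU, hKV, hUV⟩ := generalized_tube_lemma isCompact_singleton hK hW hcK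
  obtain ⟨C, hC, hCU, hCc⟩ := local_compact_nhds (hU.mem_nhds (hcU rfl))
  have hFC : UniformContinuousOn ↿F (C ×ˢ K) :=
    (hCc.prod hK).uniformContinuousOn_of_continuous (hF.mono ((prod_mono hCU hKV).trans hUV))
  have hFc := hFC.tendstoUniformlyOn (mem_of_mem_nhds hC)
  rw [nhdsWithin_eq_nhds.2 hC] at hFc
  exact fun u hu => hv (hFc u hu)

def logRem (t x : ℝ) : ℝ := if t = 0 then -x ^ 2 / 2 else (log (1 + t * x) - t * x) / t ^ 2

@[simp]
lemma logRem_zero (x : ℝ) : logRem 0 x = -x ^ 2 / 2 := if_pos rfl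

lemma logRem_of_ne_zero {t : ℝ} (ht : t ≠ 0) (x : ℝ) :
    logRem t x = (log (1 + t * x) - t * x) / t ^ 2 := if_neg ht

lemma mul_log_one_add_mul (c s x : ℝ) :
    c * log (1 + s * x) = c * s * x + c * s ^ 2 * logRem s x := by
  rcases eq_or_ne s 0 with rfl | hs
  · simp
  · rw [logRem_of_ne_zero hs]
    field_simp
    ring

lemma abs_logRem_add_sq_div_two_le {t x : ℝ} (h : |t * x| ≤ 1 / 2) :
    |logRem t x + x ^ 2 / 2| ≤ 2 * |t| * |x| ^ 3 := by
  rcases eq_or_ne t 0 with rfl | ht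
  · simp [neg_div]
  have htaylor : |log (1 + t * x) - t * x + (t * x) ^ 2 / 2| ≤ 2 * |t * x| ^ 3 := by
    have h := Real.abs_log_sub_add_sum_range_le (x := -(t * x)) (by rw [abs_neg]; linarith) 2
    simp only [Finset.sum_range_succ, Finset.sum_range_zero, abs_neg, sub_neg_eq_add,
      Nat.cast_zero, Nat.cast_one, zero_add, pow_one, div_one, even_two.neg_pow,
      one_add_one_eq_two] at h
    calc |log (1 + t * x) - t * x + (t * x) ^ 2 / 2|
        = |-(t * x) + (t * x) ^ 2 / 2 + log (1 + t * x)| := by congr 1; ring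
      _ ≤ |t * x| ^ 3 / (1 - |t * x|) := h
      _ ≤ |t * x| ^ 3 / (1 / 2) := by gcongr; linarith
      _ = 2 * |t * x| ^ 3 := by ring
  have ht2 : 0 < t ^ 2 := by positivity
  rw [logRem_of_ne_zero ht, ← mul_le_mul_iff_of_pos_right (abs_pos.2 ht2.ne'), ← abs_mul,
    abs_of_pos ht2]
  calc |((log (1 + t * x) - t * x) / t ^ 2 + x ^ 2 / 2) * t ^ 2|
      = |log (1 + t * x) - t * x + (t * x) ^ 2 / 2| := by congr 1; field_simp
    _ ≤ 2 * |t * x| ^ 3 := htaylor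
    _ = 2 * |t| * |x| ^ 3 * t ^ 2 := by rw [abs_mul, ← sq_abs t]; ring

lemma continuousAt_logRem_zero (x : ℝ) : ContinuousAt (uncurry logRem) (0, x) := by
  have hsmall : ∀ᶠ p : ℝ × ℝ in 𝓝 (0, x), |p.1 * p.2| ≤ 1 / 2 := by
    refine Tendsto.eventually_le_const (by norm_num : (0 : ℝ) < 1 / 2) ?_
    exact (continuous_fst.mul continuous_snd).abs.tendsto' _ _ (by simp)
  have hrem :
      Tendsto (fun p : ℝ × ℝ => logRem p.1 p.2 + p.2 ^ 2 / 2) (𝓝 (0, x)) (𝓝 0) := by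
    refine squeeze_zero_norm' (hsmall.mono fun p hp => abs_logRem_add_sq_div_two_le hp) ?_
    have hbound : Continuous fun p : ℝ × ℝ => 2 * |p.1| * |p.2| ^ 3 := by fun_prop
    exact hbound.tendsto' _ _ (by simp)
  have hquad : Tendsto (fun p : ℝ × ℝ => -p.2 ^ 2 / 2) (𝓝 (0, x)) (𝓝 (-x ^ 2 / 2)) :=
    ((continuous_snd.pow 2).neg.div_const 2).tendsto ((0 : ℝ), x)
  have hsum := hquad.add hrem
  rw [add_zero] at hsum
  rw [ContinuousAt, uncurry_apply_pair, logRem_zero]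
  refine hsum.congr fun p => ?_
  simp only [uncurry]
  ring

lemma continuousOn_logRem : ContinuousOn (uncurry logRem) {p : ℝ × ℝ | 0 < 1 + p.1 * p.2} := by
  rintro ⟨t, x⟩ hpos
  refine ContinuousAt.continuousWithinAt ?_
  rcases eq_or_ne t 0 with rfl | ht
  · exact continuousAt_logRem_zero x
  have hformula : ContinuousAt (fun p : ℝ × ℝ => (log (1 + p.1 * p.2) - p.1 * p.2) / p.1 ^ 2)
      (t, x) :=
    ((continuousAt_fst.mul continuousAt_snd).const_add 1).log hpos.ne' |>.sub
      (continuousAt_fst.mul continuousAt_snd) |>.div (continuousAt_fst.pow 2) (pow_ne_zero 2 ht)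
  refine hformula.congr ?_
  filter_upwards [continuousAt_fst.eventually_ne ht] with p hp
  exact (logRem_of_ne_zero hp p.2).symm

lemma tendstoUniformlyOn_mul_logRem {B t : ℕ → ℝ} {B₀ t₀ : ℝ} (hB : Tendsto B atTop (𝓝 B₀))
    (ht : Tendsto t atTop (𝓝 t₀)) {K : Set ℝ} (hK : IsCompact K)
    (hpos : ∀ x ∈ K, 0 < 1 + t₀ * x) :
    TendstoUniformlyOn (fun n x => B n * logRem (t n) x) (fun x => B₀ * logRem t₀ x) atTop K := by
  let F : ℝ × ℝ → ℝ → ℝ := fun q x => q.1 * logRem q.2 x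
  have hF : ContinuousOn ↿F {p : (ℝ × ℝ) × ℝ | 0 < 1 + p.1.2 * p.2} :=
    continuous_fst.fst.continuousOn.mul <| continuousOn_logRem.comp
      (continuous_fst.snd.prodMk continuous_snd).continuousOn fun _ hp => hp
  exact tendstoUniformlyOn_of_continuousOn_of_tendsto (F := F)
    (isOpen_lt continuous_const (by fun_prop)) hF hK
    (by rintro ⟨q, x⟩ ⟨rfl : q = _, hx⟩; exact hpos x hx) (hB.prodMk_nhds ht)

lemma tendstoUniformlyOn_mul_id {A : ℕ → ℝ} {A₀ : ℝ} (hA : Tendsto A atTop (𝓝 A₀))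
    {K : Set ℝ} (hK : IsCompact K) :
    TendstoUniformlyOn (fun n x => A n * x) (fun x => A₀ * x) atTop K :=
  tendstoUniformlyOn_of_continuousOn_of_tendsto (F := fun A x => A * x) isOpen_univ
    continuous_mul.continuousOn hK (subset_univ _) hA

lemma phiLim_eq_logRem {γ σ : ℝ} (hγ : 0 ≤ γ) (hσ : 0 ≤ σ) (x : ℝ) :
    phiLim γ σ x = √γ * (σ - 1) / 2 * x + (1 - γ) / 2 * logRem √γ x
      + σ * (1 - γ * σ) / 2 * logRem (-(√γ * σ)) x := by
  unfold phiLim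
  split_ifs with hσγ hγpos
  · obtain ⟨g, hg, rfl⟩ : ∃ g, 0 < g ∧ γ = g ^ 2 :=
      ⟨√γ, Real.sqrt_pos.2 (pos_of_mul_pos_right hσγ hσ), (Real.sq_sqrt hγ).symm⟩
    have hσpos : 0 < σ := pos_of_mul_pos_left hσγ hγ
    rw [Real.sqrt_sq hg.le, sub_eq_add_neg (1 : ℝ) (g * σ * x), ← neg_mul, mul_log_one_add_mul,
      mul_log_one_add_mul]
    field_simp
    ring
  · obtain rfl : σ = 0 := by nlinarith
    obtain ⟨g, hg, rfl⟩ : ∃ g, 0 < g ∧ γ = g ^ 2 :=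
      ⟨√γ, Real.sqrt_pos.2 hγpos, (Real.sq_sqrt hγ).symm⟩
    rw [Real.sqrt_sq hg.le, mul_log_one_add_mul]
    field_simp
    ring
  · obtain rfl : γ = 0 := by linarith
    simp only [Real.sqrt_zero, zero_mul, neg_zero, logRem_zero]
    ring

lemma one_sub_mul_pos_of_lt_inv {s M x : ℝ} (hs : 0 ≤ s) (hM : 0 < s → M < 1 / s)
    (hx : x ≤ M) : 0 < 1 - s * x := by
  rcases hs.eq_or_lt with rfl | hs
  · simp
  · have hsM : s * M < 1 := by simpa only [lt_div_iff₀ hs, mul_comm] using hM hs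
    nlinarith [mul_le_mul_of_nonneg_left hx hs.le]

def phiCoef (β : ℝ) (n p : ℕ) (a : ℝ) : ℝ := (rExp β n p - a) / (β * ((n : ℝ) - a))

lemma phiN_eq_logRem (β : ℝ) (n p1 p2 : ℕ) (a x : ℝ) :
    phiN β n p1 p2 a x =
      (phiCoef β n p1 a * sC n p1 p1 - phiCoef β n p2 a * sC n p1 p2) * x
        + phiCoef β n p1 a * sC n p1 p1 ^ 2 * logRem (sC n p1 p1) x
        + phiCoef β n p2 a * sC n p1 p2 ^ 2 * logRem (-sC n p1 p2) x := by
  change phiCoef β n p1 a * log (1 + sC n p1 p1 * x)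
    + phiCoef β n p2 a * log (1 - sC n p1 p2 * x) = _
  rw [sub_eq_add_neg (1 : ℝ), ← neg_mul, mul_log_one_add_mul, mul_log_one_add_mul]
  ring

lemma tendsto_inv_mul_natCast_of_tendsto_log_div {b : ℕ → ℝ}
    (h : Tendsto (fun n : ℕ => log n / (b n * n)) atTop (𝓝 0)) :
    Tendsto (fun n : ℕ => (b n * n)⁻¹) atTop (𝓝 0) := by
  have hlog : Tendsto (fun n : ℕ => (log n)⁻¹) atTop (𝓝 0) :=
    (Real.tendsto_log_atTop.comp tendsto_natCast_atTop_atTop).inv_tendsto_atTop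
  refine (zero_mul (0 : ℝ) ▸ h.mul hlog).congr' ?_
  filter_upwards [eventually_gt_atTop 1] with n hn
  have hlog_ne : log n ≠ 0 := (Real.log_pos (by exact_mod_cast hn)).ne'
  rw [div_eq_mul_inv, mul_comm, ← mul_assoc, inv_mul_cancel₀ hlog_ne, one_mul]

lemma sC_self (n p : ℕ) : sC n p p = √(n / p) := by
  have hsq : (n : ℝ) / p = n * p / (p : ℝ) ^ 2 := by
    rcases eq_or_ne (p : ℝ) 0 with hp | hp
    · simp [hp]
    · field_simp
  rw [sC, hsq, Real.sqrt_div (by positivity), Real.sqrt_sq (Nat.cast_nonneg p)]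

lemma sC_self_sq (n p : ℕ) : sC n p p ^ 2 = n / p := by
  rw [sC_self, Real.sq_sqrt (by positivity)]

lemma sC_sq (n p1 p2 : ℕ) : sC n p1 p2 ^ 2 = n / p2 * (p1 / p2) := by
  rw [sC, div_pow, Real.sq_sqrt (by positivity)]
  ring

lemma sC_eq_sC_self_mul (n p1 p2 : ℕ) : sC n p1 p2 = sC n p1 p1 * (p1 / p2) := by
  rcases eq_or_ne (p1 : ℝ) 0 with hp | hp
  · simp [sC, hp]
  · simp only [sC]
    field_simp

section Coefficients

variable {β a : ℝ} {n p p1 p2 : ℕ}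

lemma phiCoef_mul_div_eq (hβ : β ≠ 0) (hn : (n : ℝ) ≠ 0) (hp : (p : ℝ) ≠ 0)
    (hna : (n : ℝ) - a ≠ 0) :
    phiCoef β n p a * (n / p) =
      ((1 - n / p + 1 / p) / 2 - a * (n / p) * (β * n)⁻¹) * (n / (n - a)) := by
  unfold phiCoef rExp
  field_simp

lemma phiCoef_sub_phiCoef_mul_eq (hβ : β ≠ 0) (hn : (n : ℝ) ≠ 0) (hp2 : (p2 : ℝ) ≠ 0)
    (hna : (n : ℝ) - a ≠ 0) :
    phiCoef β n p1 a - phiCoef β n p2 a * (p1 / p2) =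
      (p1 / p2 - 1) * ((1 - 1 / n) / 2 + a * (β * n)⁻¹) * (n / (n - a)) := by
  unfold phiCoef rExp
  field_simp
  ring

end Coefficients

lemma tendsto_natCast_div_sub_atTop (a : ℝ) :
    Tendsto (fun n : ℕ => (n : ℝ) / (n - a)) atTop (𝓝 1) := by
  simpa only [sub_eq_add_neg] using tendsto_natCast_div_add_atTop (-a)

lemma tendsto_phiCoef_mul_div {β : ℕ → ℝ} {q : ℕ → ℕ} {ℓ : ℝ} (a : ℝ) (hβ : ∀ n, β n ≠ 0)
    (hβn : Tendsto (fun n : ℕ => (β n * n)⁻¹) atTop (𝓝 0)) (hq : ∀ n, n ≤ q n)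
    (hℓ : Tendsto (fun n : ℕ => (n : ℝ) / q n) atTop (𝓝 ℓ)) :
    Tendsto (fun n : ℕ => phiCoef (β n) n (q n) a * (n / q n)) atTop (𝓝 ((1 - ℓ) / 2)) := by
  have hq_inv : Tendsto (fun n : ℕ => 1 / (q n : ℝ)) atTop (𝓝 0) := by
    refine squeeze_zero' (.of_forall fun n => by positivity) ?_
      tendsto_one_div_atTop_nhds_zero_nat
    filter_upwards [eventually_gt_atTop 0] with n hn
    exact one_div_le_one_div_of_le (by exact_mod_cast hn) (by exact_mod_cast hq n)
  have hlim := ((((tendsto_const_nhds (x := (1 : ℝ)) |>.sub hℓ).add hq_inv).div_const 2).sub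
    ((hℓ.const_mul a).mul hβn)).mul (tendsto_natCast_div_sub_atTop a)
  rw [show ((1 - ℓ + 0) / 2 - a * ℓ * 0) * 1 = (1 - ℓ) / 2 by ring] at hlim
  refine hlim.congr' ?_
  filter_upwards [eventually_gt_atTop 0,
    tendsto_natCast_atTop_atTop.eventually_gt_atTop a] with n hn hna
  have hn' : (0 : ℝ) < n := by exact_mod_cast hn
  have hq' : (0 : ℝ) < q n := by exact_mod_cast hn.trans_le (hq n)
  rw [phiCoef_mul_div_eq (hβ n) hn'.ne' hq'.ne' (sub_ne_zero.2 hna.ne')]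

namespace AssumptionA

variable {β : ℕ → ℝ} {p1 p2 : ℕ → ℕ} {γ σ : ℝ}

lemma tendsto_sC_self (hA : AssumptionA β p1 p2 γ σ) :
    Tendsto (fun n => sC n (p1 n) (p1 n)) atTop (𝓝 √γ) := by
  simpa only [sC_self] using hA.limγ.sqrt

lemma tendsto_sC (hA : AssumptionA β p1 p2 γ σ) :
    Tendsto (fun n => sC n (p1 n) (p2 n)) atTop (𝓝 (√γ * σ)) :=
  (hA.tendsto_sC_self.mul hA.limσ).congr fun n => (sC_eq_sC_self_mul n (p1 n) (p2 n)).symm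

lemma tendsto_natCast_div_p2 (hA : AssumptionA β p1 p2 γ σ) :
    Tendsto (fun n : ℕ => (n : ℝ) / p2 n) atTop (𝓝 (γ * σ)) := by
  refine (hA.limγ.mul hA.limσ).congr' ?_
  filter_upwards [eventually_gt_atTop 0] with n hn
  have hp1 : (0 : ℝ) < p1 n := by exact_mod_cast hn.trans_le (hA.hp1 n)
  field_simp

lemma tendsto_phiCoef_mul_sC_self_sq (hA : AssumptionA β p1 p2 γ σ) (a : ℝ) :
    Tendsto (fun n => phiCoef (β n) n (p1 n) a * sC n (p1 n) (p1 n) ^ 2) atTop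
      (𝓝 ((1 - γ) / 2)) := by
  simpa only [sC_self_sq] using tendsto_phiCoef_mul_div a (fun n => (hA.hβ n).ne')
    (tendsto_inv_mul_natCast_of_tendsto_log_div hA.limlog) hA.hp1 hA.limγ

lemma tendsto_phiCoef_mul_sC_sq (hA : AssumptionA β p1 p2 γ σ) (a : ℝ) :
    Tendsto (fun n => phiCoef (β n) n (p2 n) a * sC n (p1 n) (p2 n) ^ 2) atTop
      (𝓝 (σ * (1 - γ * σ) / 2)) := by
  have h := (tendsto_phiCoef_mul_div a (fun n => (hA.hβ n).ne')
    (tendsto_inv_mul_natCast_of_tendsto_log_div hA.limlog) hA.hp2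
    hA.tendsto_natCast_div_p2).mul hA.limσ
  rw [show (1 - γ * σ) / 2 * σ = σ * (1 - γ * σ) / 2 by ring] at h
  refine h.congr fun n => ?_
  rw [sC_sq, mul_assoc]

lemma tendsto_phiCoef_mul_sC_sub (hA : AssumptionA β p1 p2 γ σ) (a : ℝ) :
    Tendsto (fun n => phiCoef (β n) n (p1 n) a * sC n (p1 n) (p1 n)
        - phiCoef (β n) n (p2 n) a * sC n (p1 n) (p2 n)) atTop (𝓝 (√γ * (σ - 1) / 2)) := by
  have hhalf : Tendsto (fun n : ℕ => (1 - 1 / (n : ℝ)) / 2) atTop (𝓝 ((1 - 0) / 2)) :=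
    ((tendsto_const_nhds (x := (1 : ℝ))).sub tendsto_one_div_atTop_nhds_zero_nat).div_const 2
  have h := hA.tendsto_sC_self.mul (((hA.limσ.sub_const 1).mul (hhalf.add
    ((tendsto_inv_mul_natCast_of_tendsto_log_div hA.limlog).const_mul a))).mul
    (tendsto_natCast_div_sub_atTop a))
  rw [show √γ * ((σ - 1) * ((1 - 0) / 2 + a * 0) * 1) = √γ * (σ - 1) / 2 by ring] at h
  refine h.congr' ?_
  filter_upwards [eventually_gt_atTop 0,
    tendsto_natCast_atTop_atTop.eventually_gt_atTop a] with n hn hna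
  have hn' : (0 : ℝ) < n := by exact_mod_cast hn
  have hp2 : (0 : ℝ) < p2 n := by exact_mod_cast hn.trans_le (hA.hp2 n)
  rw [← phiCoef_sub_phiCoef_mul_eq (hA.hβ n).ne' hn'.ne' hp2.ne' (sub_ne_zero.2 hna.ne'),
    sC_eq_sC_self_mul n (p1 n) (p2 n)]
  ring

end AssumptionA

theorem phiN_tendstoUniformlyOn_general (β : ℕ → ℝ) (p1 p2 : ℕ → ℕ) (γ σ : ℝ)
    (hA : AssumptionA β p1 p2 γ σ) (a L M : ℝ)
    (hL : 0 < γ → -(1 / Real.sqrt γ) < -L)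
    (hM : 0 < γ * σ → M < 1 / (Real.sqrt γ * σ)) :
    TendstoUniformlyOn (fun (n : ℕ) (x : ℝ) => phiN (β n) n (p1 n) (p2 n) a x)
      (phiLim γ σ) atTop (Set.Icc (-L) M) := by
  have hK : IsCompact (Icc (-L) M) := isCompact_Icc
  have hpos₁ (x : ℝ) (hx : x ∈ Icc (-L) M) : 0 < 1 + √γ * x := by
    have h := one_sub_mul_pos_of_lt_inv (Real.sqrt_nonneg γ) (x := -x)
      (fun h => by linarith [hL (Real.sqrt_pos.1 h)]) (neg_le.1 hx.1)
    rwa [mul_neg, sub_neg_eq_add] at h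
  have hpos₂ (x : ℝ) (hx : x ∈ Icc (-L) M) : 0 < 1 + -(√γ * σ) * x := by
    rw [neg_mul, ← sub_eq_add_neg]
    refine one_sub_mul_pos_of_lt_inv (mul_nonneg (Real.sqrt_nonneg γ) hA.hσ) (fun h => hM ?_) hx.2
    exact mul_pos (Real.sqrt_pos.1 (pos_of_mul_pos_left h hA.hσ))
      (pos_of_mul_pos_right h (Real.sqrt_nonneg γ))
  have hlim := ((tendstoUniformlyOn_mul_id (hA.tendsto_phiCoef_mul_sC_sub a) hK).add
    (tendstoUniformlyOn_mul_logRem (hA.tendsto_phiCoef_mul_sC_self_sq a) hA.tendsto_sC_self hK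
      hpos₁)).add
    (tendstoUniformlyOn_mul_logRem (hA.tendsto_phiCoef_mul_sC_sq a) hA.tendsto_sC.neg hK hpos₂)
  refine (hlim.congr (.of_forall fun n x _ => ?_)).congr_right fun x _ => ?_
  · simp only [Pi.add_apply, phiN_eq_logRem]
  · simp only [Pi.add_apply, phiLim_eq_logRem hA.hγ0 hA.hσ]

/-- Lemma 5.1 (phix): for any constant `a`, under Assumption A the functions
`φ_{n−a}(x) = ((r_{1,n}−a)/(β(n−a))) log(1+s_{1,n}x) + ((r_{2,n}−a)/(β(n−a))) log(1−s_{2,n}x)`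
converge uniformly to `φ_{γ,σ}` on `[−L, M]` whenever `−1/√γ < −L < M < 1/(√γσ)`. -/
theorem phiN_tendstoUniformlyOn (β : ℕ → ℝ) (p1 p2 : ℕ → ℕ) (γ σ : ℝ)
    (hA : AssumptionA β p1 p2 γ σ) (a L M : ℝ)
    (hL : 0 < γ → -(1 / Real.sqrt γ) < -L) (hLM : -L < M)
    (hM : 0 < γ * σ → M < 1 / (Real.sqrt γ * σ)) :
    TendstoUniformlyOn (fun (n : ℕ) (x : ℝ) => phiN (β n) n (p1 n) (p2 n) a x)
      (phiLim γ σ) atTop (Set.Icc (-L) M) :=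
  phiN_tendstoUniformlyOn_general β p1 p2 γ σ hA a L M hL hM

end BetaJacobiLDP
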